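/- Let $X_t$ be Fréchet($\alpha=1$) distributed with joint survival structure of a stationary max-stable process, and set $a_m = m \int_E f_0\,d\nu$. Then the pre-asymptotic extremogram satisfies $\rho_{AA,m}(h) := \frac{P(\min(X_0,X_h) > a_m)}{P(X_0 > a_m)} = \rho(h) - m^{-1}c_h(1 + o(1))$ as $m \to \infty$ for some constant $c_h$, where $\rho(h) = \int_E f_0 \wedge f_h\,d\nu / \int_E f_0\,d\nu$. Consequently $\sqrt{n/m}\,|\rho_{AA,m}(h) - \rho(h)| \to 0$ if and only if $n^{1/3} = o(m)$ (taking $m = m_n$ with $m_n \to \infty$, $m_n/n \to 0$). -/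

import Mathlib

/-!
With `a = m ∫ f₀ dν` the marginal exceedance rate is `u = 1/m`, and with the extremal
coefficient `r = ∫ f₀ ∨ f_h dν / ∫ f₀ dν ∈ (1, 2]` one has `ρ(h) = 2 - r` and
`ρ_{AA,m}(h) = (1 - 2e^{-u} + e^{-ru}) / (1 - e^{-u})`. Expanding `e^{-u}` to second order
gives `ρ_{AA,m}(h) - ρ(h) = r(r-1)/2 · u + o(u)`, so `c_h = -r(r-1)/2 ≠ 0`. For the rate
statement, `√(n/m) |ρ_{AA,m}(h) - ρ(h)| = |m(ρ_{AA,m}(h) - ρ(h))| · (n^{1/3}/m)^{3/2}`, and the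
first factor tends to `|c_h| ≠ 0`.
-/

open Filter Topology MeasureTheory

namespace Real

theorem abs_exp_neg_sub_one_add_div_sq_sub_half_le {u : ℝ} (hu0 : u ≠ 0) (hu : |u| ≤ 1) :
    |(exp (-u) - 1 + u) / u ^ 2 - 1 / 2| ≤ 2 / 9 * |u| := by
  have hb := exp_bound (x := -u) (by rwa [abs_neg]) (n := 3) (by norm_num)
  norm_num [Finset.sum_range_succ, Nat.factorial] at hb
  have hsq : 0 < u ^ 2 := by positivity
  rw [show (exp (-u) - 1 + u) / u ^ 2 - 1 / 2 = (exp (-u) - (1 + -u + u ^ 2 / 2)) / u ^ 2 by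
    field_simp; ring, abs_div, abs_of_pos hsq, div_le_iff₀ hsq]
  refine hb.trans_eq ?_
  rw [← sq_abs u]
  ring

theorem tendsto_exp_neg_sub_one_add_div_sq :
    Tendsto (fun u : ℝ => (exp (-u) - 1 + u) / u ^ 2) (𝓝[≠] 0) (𝓝 (1 / 2)) := by
  rw [tendsto_iff_norm_sub_tendsto_zero]
  have hbound : Tendsto (fun u : ℝ => 2 / 9 * |u|) (𝓝[≠] 0) (𝓝 0) := by
    simpa using (continuous_abs.tendsto (0 : ℝ)).mono_left nhdsWithin_le_nhds |>.const_mul (2 / 9)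
  refine squeeze_zero' (Eventually.of_forall fun _ => norm_nonneg _) ?_ hbound
  filter_upwards [self_mem_nhdsWithin, nhdsWithin_le_nhds (Metric.closedBall_mem_nhds 0 one_pos)]
    with u hu0 hu1
  exact abs_exp_neg_sub_one_add_div_sq_sub_half_le hu0 (by simpa using hu1)

theorem tendsto_one_sub_exp_neg_div :
    Tendsto (fun u : ℝ => (1 - exp (-u)) / u) (𝓝[≠] 0) (𝓝 1) := by
  have hid : Tendsto (fun u : ℝ => u) (𝓝[≠] 0) (𝓝 0) := nhdsWithin_le_nhds
  have := (tendsto_const_nhds (x := (1 : ℝ))).sub (hid.mul tendsto_exp_neg_sub_one_add_div_sq)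
  rw [zero_mul, sub_zero] at this
  refine this.congr' ?_
  filter_upwards [self_mem_nhdsWithin] with u (hu : u ≠ 0)
  field_simp
  ring

end Real

open Real

/-- `P(X > a, Y > a) / P(X > a)` for a max-stable pair with unit-Fréchet margins
`P(X ≤ a) = e^{-θ/a}`, written in terms of `u = θ / a` and the extremal coefficient `r`. -/
noncomputable def frechetExtremogram (r u : ℝ) : ℝ :=
  (1 - 2 * exp (-u) + exp (-(r * u))) / (1 - exp (-u))

theorem tendsto_frechetExtremogram_sub_div {r : ℝ} (hr : r ≠ 0) :
    Tendsto (fun u => (frechetExtremogram r u - (2 - r)) / u) (𝓝[≠] 0)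
      (𝓝 (r * (r - 1) / 2)) := by
  have hscale : Tendsto (fun u : ℝ => r * u) (𝓝[≠] 0) (𝓝[≠] 0) := by
    simpa [Tendsto] using ((Homeomorph.mulLeft₀ r hr).map_punctured_nhds_eq 0).le
  -- `(frechetExtremogram r u - (2 - r)) (1 - e^{-u}) = u² (r² φ(r u) - r φ(u))`
  -- with `φ(u) = (e^{-u} - 1 + u) / u²`
  have hnum := ((tendsto_exp_neg_sub_one_add_div_sq.comp hscale).const_mul (r ^ 2)).sub
    (tendsto_exp_neg_sub_one_add_div_sq.const_mul r)
  have := hnum.div tendsto_one_sub_exp_neg_div one_ne_zero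
  rw [div_one, show r ^ 2 * (1 / 2) - r * (1 / 2) = r * (r - 1) / 2 by ring] at this
  refine this.congr' ?_
  filter_upwards [self_mem_nhdsWithin] with u (hu : u ≠ 0)
  have hexp : 1 - exp (-u) ≠ 0 := by
    rw [sub_ne_zero, ne_comm, Ne, exp_eq_one_iff]; exact neg_ne_zero.2 hu
  simp only [Pi.div_apply, Function.comp_apply, frechetExtremogram]
  field_simp
  ring

theorem probReal_both_gt_div_probReal_gt {Ω : Type*} [MeasurableSpace Ω] (P : Measure Ω)
    [IsProbabilityMeasure P] {X Y : Ω → ℝ} (hX : Measurable X) (hY : Measurable Y) {a p q : ℝ}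
    (hXa : P.real {ω | X ω ≤ a} = p) (hYa : P.real {ω | Y ω ≤ a} = p)
    (hXYa : P.real {ω | X ω ≤ a ∧ Y ω ≤ a} = q) :
    P.real {ω | X ω > a ∧ Y ω > a} / P.real {ω | X ω > a} = (1 - 2 * p + q) / (1 - p) := by
  have hXm : MeasurableSet {ω | X ω ≤ a} := measurableSet_le hX measurable_const
  have hYm : MeasurableSet {ω | Y ω ≤ a} := measurableSet_le hY measurable_const
  have hboth : {ω | X ω > a ∧ Y ω > a} = ({ω | X ω ≤ a} ∪ {ω | Y ω ≤ a})ᶜ := by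
    ext ω; simp [not_le]
  have hunion := measureReal_union_add_inter (μ := P) (s := {ω | X ω ≤ a}) hYm
  rw [show {ω | X ω ≤ a} ∩ {ω | Y ω ≤ a} = {ω | X ω ≤ a ∧ Y ω ≤ a} from rfl] at hunion
  rw [hboth, probReal_compl_eq_one_sub (hXm.union hYm),
    show {ω | X ω > a} = {ω | X ω ≤ a}ᶜ by ext ω; simp, probReal_compl_eq_one_sub hXm]
  congr 1 <;> linarith

theorem probReal_both_gt_div_probReal_gt_eq_frechetExtremogram {Ω : Type*}
    [MeasurableSpace Ω] (P : Measure Ω) [IsProbabilityMeasure P] {X Y : Ω → ℝ}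
    (hX : Measurable X) (hY : Measurable Y) {a θ θ' : ℝ} (hθ : θ ≠ 0)
    (hXa : P.real {ω | X ω ≤ a} = exp (-a⁻¹ * θ)) (hYa : P.real {ω | Y ω ≤ a} = exp (-a⁻¹ * θ))
    (hXYa : P.real {ω | X ω ≤ a ∧ Y ω ≤ a} = exp (-a⁻¹ * θ')) :
    P.real {ω | X ω > a ∧ Y ω > a} / P.real {ω | X ω > a} =
      frechetExtremogram (θ' / θ) (a⁻¹ * θ) := by
  rw [probReal_both_gt_div_probReal_gt P hX hY hXa hYa hXYa, frechetExtremogram]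
  field_simp

theorem sqrt_div_mul_abs_eq {N M : ℝ} (hN : 0 ≤ N) (hM : 0 < M) (D : ℝ) :
    √(N / M) * |D| = |M * D| * (N ^ (1 / 3 : ℝ) / M) ^ (3 / 2 : ℝ) := by
  rw [Real.div_rpow (Real.rpow_nonneg hN _) hM.le, ← Real.rpow_mul hN,
    show (3 / 2 : ℝ) = 1 + 1 / 2 by norm_num, Real.rpow_add hM, Real.rpow_one,
    Real.sqrt_eq_rpow, Real.div_rpow hN hM.le, abs_mul, abs_of_pos hM]
  have : 0 < M ^ (1 / 2 : ℝ) := Real.rpow_pos_of_pos hM _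
  norm_num
  field_simp

theorem tendsto_rpow_nhds_zero_iff {ι : Type*} {l : Filter ι} {x : ι → ℝ}
    (hx : ∀ᶠ i in l, 0 ≤ x i) {p : ℝ} (hp : 0 < p) :
    Tendsto (fun i => x i ^ p) l (𝓝 0) ↔ Tendsto x l (𝓝 0) := by
  refine ⟨fun h => ?_, fun h => by simpa [Real.zero_rpow hp.ne'] using h.rpow_const (Or.inr hp.le)⟩
  have := h.rpow_const (p := p⁻¹) (Or.inr (inv_nonneg.2 hp.le))
  rw [Real.zero_rpow (inv_ne_zero hp.ne')] at this
  refine this.congr' ?_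
  filter_upwards [hx] with i hi
  rw [← Real.rpow_mul hi, mul_inv_cancel₀ hp.ne', Real.rpow_one]

theorem tendsto_sqrt_div_mul_abs_iff {ι : Type*} {l : Filter ι} {N M D : ι → ℝ} {L : ℝ}
    (hN : ∀ᶠ i in l, 0 ≤ N i) (hM : ∀ᶠ i in l, 0 < M i)
    (hD : Tendsto (fun i => M i * D i) l (𝓝 L)) (hL : L ≠ 0) :
    Tendsto (fun i => √(N i / M i) * |D i|) l (𝓝 0) ↔
      Tendsto (fun i => N i ^ (1 / 3 : ℝ) / M i) l (𝓝 0) := by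
  have hpos : ∀ᶠ i in l, 0 ≤ N i ^ (1 / 3 : ℝ) / M i := by
    filter_upwards [hN, hM] with i hNi hMi using div_nonneg (Real.rpow_nonneg hNi _) hMi.le
  have hsplit : (fun i => √(N i / M i) * |D i|) =ᶠ[l]
      fun i => (N i ^ (1 / 3 : ℝ) / M i) ^ (3 / 2 : ℝ) * |M i * D i| := by
    filter_upwards [hN, hM] with i hNi hMi
    rw [sqrt_div_mul_abs_eq hNi hMi, mul_comm]
  rw [tendsto_congr' hsplit, ← tendsto_rpow_nhds_zero_iff hpos (show (0 : ℝ) < 3 / 2 by norm_num)]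
  simpa only [zero_mul] using Filter.tendsto_mul_iff_of_ne_zero (x := 0) hD.abs (abs_ne_zero.2 hL)

theorem integral_min_add_integral_max {α : Type*} [MeasurableSpace α] {μ : Measure α}
    {f g : α → ℝ} (hf : Integrable f μ) (hg : Integrable g μ) :
    ∫ x, min (f x) (g x) ∂μ + ∫ x, max (f x) (g x) ∂μ = ∫ x, f x ∂μ + ∫ x, g x ∂μ := by
  rw [← integral_add hf hg]
  exact (integral_add (hf.inf hg) (hf.sup hg)).symm.trans
    (integral_congr_ae (Eventually.of_forall fun x => min_add_max (f x) (g x)))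

theorem preasymptotic_extremogram_bias_general
    {Ω E : Type*} [MeasurableSpace Ω] [MeasurableSpace E]
    (P : Measure Ω) [IsProbabilityMeasure P]
    (ν : Measure E)
    (f0 fh : E → ℝ)
    (hint0 : Integrable f0 ν) (hinth : Integrable fh ν)
    (hstat : ∫ y, fh y ∂ν = ∫ y, f0 y ∂ν)
    (hpos : 0 < ∫ y, f0 y ∂ν)
    -- nondegeneracy (this is the assumption `c_h ≠ 0`)
    (hnondeg : ∫ y, f0 y ∂ν < ∫ y, max (f0 y) (fh y) ∂ν)
    (X0 Xh : Ω → ℝ) (hX0 : Measurable X0) (hXh : Measurable Xh)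
    -- bivariate max-stable (unit Fréchet, `α = 1`) distribution of `(X₀, X_h)`
    (hjoint : ∀ x : ℝ, 0 < x →
      (P {ω | X0 ω ≤ x ∧ Xh ω ≤ x}).toReal
        = Real.exp (-(x⁻¹) * ∫ y, max (f0 y) (fh y) ∂ν))
    (hmarg0 : ∀ x : ℝ, 0 < x →
      (P {ω | X0 ω ≤ x}).toReal = Real.exp (-(x⁻¹) * ∫ y, f0 y ∂ν))
    (hmargh : ∀ x : ℝ, 0 < x →
      (P {ω | Xh ω ≤ x}).toReal = Real.exp (-(x⁻¹) * ∫ y, fh y ∂ν))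
    (aseq : ℕ → ℝ) (haseq : ∀ m : ℕ, aseq m = (m : ℝ) * ∫ y, f0 y ∂ν)
    (ρ : ℝ) (hρ : ρ = (∫ y, min (f0 y) (fh y) ∂ν) / ∫ y, f0 y ∂ν)
    -- the pre-asymptotic extremogram `ρ_{AA,m}(h) = P(min(X₀,X_h) > a_m)/P(X₀ > a_m)`
    (ρm : ℕ → ℝ)
    (hρm : ∀ m : ℕ, ρm m
      = (P {ω | X0 ω > aseq m ∧ Xh ω > aseq m}).toReal
          / (P {ω | X0 ω > aseq m}).toReal) :
    ∃ c : ℝ, c ≠ 0 ∧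
      Tendsto (fun m : ℕ => (m : ℝ) * (ρm m - ρ)) atTop (𝓝 (-c)) ∧
      ∀ mseq : ℕ → ℕ, Tendsto mseq atTop atTop →
        Tendsto (fun n : ℕ => (mseq n : ℝ) / n) atTop (𝓝 0) →
        (Tendsto (fun n : ℕ =>
            Real.sqrt ((n : ℝ) / mseq n) * |ρm (mseq n) - ρ|) atTop (𝓝 0)
          ↔ Tendsto (fun n : ℕ => (n : ℝ) ^ ((1:ℝ)/3) / mseq n) atTop (𝓝 0)) := by
  set I₀ := ∫ y, f0 y ∂ν
  set r := (∫ y, max (f0 y) (fh y) ∂ν) / I₀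
  have hr : 1 < r := (one_lt_div hpos).2 hnondeg
  have hρr : ρ = 2 - r := by
    have hmin : ∫ y, min (f0 y) (fh y) ∂ν = 2 * I₀ - r * I₀ := by
      linarith [integral_min_add_integral_max hint0 hinth,
        div_mul_cancel₀ (∫ y, max (f0 y) (fh y) ∂ν) hpos.ne']
    rw [hρ, hmin]
    field_simp
  have hρm_eq : ∀ m : ℕ, 0 < m → ρm m = frechetExtremogram r (m : ℝ)⁻¹ := by
    intro m hm
    have ha : 0 < aseq m := haseq m ▸ mul_pos (Nat.cast_pos.2 hm) hpos
    refine (hρm m).trans ((probReal_both_gt_div_probReal_gt_eq_frechetExtremogram P hX0 hXh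
      hpos.ne' (hmarg0 _ ha) ((hmargh _ ha).trans (by rw [hstat])) (hjoint _ ha)).trans ?_)
    rw [haseq, mul_inv, inv_mul_cancel_right₀ hpos.ne']
  have hbias : Tendsto (fun m : ℕ => (m : ℝ) * (ρm m - ρ)) atTop (𝓝 (r * (r - 1) / 2)) := by
    have hinv : Tendsto (fun m : ℕ => (m : ℝ)⁻¹) atTop (𝓝[≠] 0) :=
      (tendsto_inv_atTop_nhdsGT_zero.comp tendsto_natCast_atTop_atTop).mono_right
        (nhdsGT_le_nhdsNE 0)
    refine ((tendsto_frechetExtremogram_sub_div (by positivity)).comp hinv).congr' ?_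
    filter_upwards [eventually_gt_atTop 0] with m hm
    rw [Function.comp_apply, hρm_eq m hm, hρr, div_inv_eq_mul, mul_comm]
  refine ⟨-(r * (r - 1) / 2), by nlinarith, by simpa using hbias, fun mseq hmseq _ => ?_⟩
  refine tendsto_sqrt_div_mul_abs_iff (Eventually.of_forall fun n => Nat.cast_nonneg n) ?_
    (hbias.comp hmseq) (by nlinarith)
  filter_upwards [hmseq.eventually_gt_atTop 0] with n hn using Nat.cast_pos.2 hn

/-- Bias of the pre-asymptotic extremogram for a stationary max-stable process
with unit-Fréchet (`α = 1`) marginals and `a_m = m ∫ f₀ dν`: there is a constant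
`c_h ≠ 0` with `m(ρ_{AA,m}(h) - ρ(h)) → -c_h` (i.e. `ρ_{AA,m}(h) = ρ(h) - m⁻¹c_h(1+o(1))`),
and consequently, for `m = m_n → ∞` with `m_n/n → 0`,
`√(n/m_n)|ρ_{AA,m_n}(h) - ρ(h)| → 0` iff `n^{1/3} = o(m_n)`. -/
theorem preasymptotic_extremogram_bias
    {Ω E : Type*} [MeasurableSpace Ω] [MeasurableSpace E]
    (P : Measure Ω) [IsProbabilityMeasure P]
    (ν : Measure E) [SigmaFinite ν]
    (f0 fh : E → ℝ) (hf0m : Measurable f0) (hfhm : Measurable fh)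
    (hf0 : ∀ y, 0 ≤ f0 y) (hfh : ∀ y, 0 ≤ fh y)
    (hint0 : Integrable f0 ν) (hinth : Integrable fh ν)
    (hintmax : Integrable (fun y => max (f0 y) (fh y)) ν)
    (hstat : ∫ y, fh y ∂ν = ∫ y, f0 y ∂ν)
    (hpos : 0 < ∫ y, f0 y ∂ν)
    -- nondegeneracy (this is the assumption `c_h ≠ 0`)
    (hnondeg : ∫ y, f0 y ∂ν < ∫ y, max (f0 y) (fh y) ∂ν)
    (X0 Xh : Ω → ℝ) (hX0 : Measurable X0) (hXh : Measurable Xh)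
    -- bivariate max-stable (unit Fréchet, `α = 1`) distribution of `(X₀, X_h)`
    (hjoint : ∀ x : ℝ, 0 < x →
      (P {ω | X0 ω ≤ x ∧ Xh ω ≤ x}).toReal
        = Real.exp (-(x⁻¹) * ∫ y, max (f0 y) (fh y) ∂ν))
    (hmarg0 : ∀ x : ℝ, 0 < x →
      (P {ω | X0 ω ≤ x}).toReal = Real.exp (-(x⁻¹) * ∫ y, f0 y ∂ν))
    (hmargh : ∀ x : ℝ, 0 < x →
      (P {ω | Xh ω ≤ x}).toReal = Real.exp (-(x⁻¹) * ∫ y, fh y ∂ν))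
    (aseq : ℕ → ℝ) (haseq : ∀ m : ℕ, aseq m = (m : ℝ) * ∫ y, f0 y ∂ν)
    (ρ : ℝ) (hρ : ρ = (∫ y, min (f0 y) (fh y) ∂ν) / ∫ y, f0 y ∂ν)
    -- the pre-asymptotic extremogram `ρ_{AA,m}(h) = P(min(X₀,X_h) > a_m)/P(X₀ > a_m)`
    (ρm : ℕ → ℝ)
    (hρm : ∀ m : ℕ, ρm m
      = (P {ω | X0 ω > aseq m ∧ Xh ω > aseq m}).toReal
          / (P {ω | X0 ω > aseq m}).toReal) :
    ∃ c : ℝ, c ≠ 0 ∧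
      Tendsto (fun m : ℕ => (m : ℝ) * (ρm m - ρ)) atTop (𝓝 (-c)) ∧
      ∀ mseq : ℕ → ℕ, Tendsto mseq atTop atTop →
        Tendsto (fun n : ℕ => (mseq n : ℝ) / n) atTop (𝓝 0) →
        (Tendsto (fun n : ℕ =>
            Real.sqrt ((n : ℝ) / mseq n) * |ρm (mseq n) - ρ|) atTop (𝓝 0)
          ↔ Tendsto (fun n : ℕ => (n : ℝ) ^ ((1:ℝ)/3) / mseq n) atTop (𝓝 0)) :=
  preasymptotic_extremogram_bias_general P ν f0 fh hint0 hinth hstat hpos hnondeg X0 Xh hX0 hXh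
    hjoint hmarg0 hmargh aseq haseq ρ hρ ρm hρm
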